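/- arXiv:2006.01350 — 2 statements merged into one kernel-verified Lean document; each statement's English description precedes it below -/
import Mathlib

section
/- Let (μ_i), (f_i) be real sequences with μ_i > 0, and suppose ∑_i i^α |f_i| < ∞ for some α > k + 1/2 with k a nonnegative integer. Assume μ_i ≥ c i^{−2α} for some c > 0 and let λ ∈ (0,1]. Then ∑_{i=1}^∞ (λ/(λ+μ_i)) |f_i| i^k ≤ C λ^{1/2 − k/(2α)} ∑_i i^α |f_i| for a constant C depending only on c, α, k. -/
/-!
Write `t = i^(-2α)` and `β = 1/2 - k/(2α)`. Clearing the denominator, the termwise bound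
`λ/(λ+μ_i) · i^k ≤ C λ^β i^α` is `i^(k-α) λ^(1-β) ≤ C (λ + μ_i)`, and the left side is the
weighted geometric mean `t^((α-k)/(2α)) λ^((α+k)/(2α))`, hence at most the corresponding
arithmetic mean, which is `≤ (1 + 1/c)(λ + c t)`. Summing against `i^α |f_i|` gives the theorem.
-/

lemma rpow_sub_mul_rpow_le_add {α k x lam : ℝ} (hα : 0 < α) (hk : |k| ≤ α) (hx : 0 < x)
    (hlam : 0 ≤ lam) :
    x ^ (k - α) * lam ^ (1 / 2 + k / (2 * α)) ≤
      (α - k) / (2 * α) * x ^ (-(2 * α)) + (α + k) / (2 * α) * lam := by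
  obtain ⟨hkl, hku⟩ := abs_le.mp hk
  have hgm := Real.geom_mean_le_arith_mean2_weighted
    (w₁ := (α - k) / (2 * α)) (w₂ := (α + k) / (2 * α)) (p₁ := x ^ (-(2 * α))) (p₂ := lam)
    (div_nonneg (by linarith) (by positivity)) (div_nonneg (by linarith) (by positivity))
    (by positivity) hlam (by field_simp; ring)
  have hx_pow : (x ^ (-(2 * α))) ^ ((α - k) / (2 * α)) = x ^ (k - α) := by
    rw [← Real.rpow_mul hx.le]
    congr 1
    field_simp
    ring
  have hlam_exp : (α + k) / (2 * α) = 1 / 2 + k / (2 * α) := by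
    field_simp
  rw [hx_pow, hlam_exp] at hgm
  rwa [hlam_exp]

lemma div_add_mul_rpow_le {c α k x lam μ : ℝ} (hc : 0 < c) (hα : 0 < α) (hk : |k| ≤ α)
    (hx : 0 < x) (hlam : 0 < lam) (hμ : c * x ^ (-(2 * α)) ≤ μ) :
    lam / (lam + μ) * x ^ k ≤ (1 + 1 / c) * lam ^ (1 / 2 - k / (2 * α)) * x ^ α := by
  obtain ⟨hkl, hku⟩ := abs_le.mp hk
  have hμ_pos : 0 < μ := lt_of_lt_of_le (by positivity) hμ
  have hyoung : x ^ (k - α) * lam ^ (1 / 2 + k / (2 * α)) ≤ (1 + 1 / c) * (lam + μ) := by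
    have hmean := rpow_sub_mul_rpow_le_add hα hk hx hlam.le
    have hw₁ : (α - k) / (2 * α) ≤ 1 := by rw [div_le_one (by positivity)]; linarith
    have hw₂ : (α + k) / (2 * α) ≤ 1 := by rw [div_le_one (by positivity)]; linarith
    have hw₁_nonneg : 0 ≤ (α - k) / (2 * α) := div_nonneg (by linarith) (by positivity)
    have ht_le : x ^ (-(2 * α)) ≤ μ / c := by rw [le_div_iff₀ hc]; linarith
    calc x ^ (k - α) * lam ^ (1 / 2 + k / (2 * α))
        ≤ (α - k) / (2 * α) * x ^ (-(2 * α)) + (α + k) / (2 * α) * lam := hmean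
      _ ≤ 1 * (μ / c) + 1 * lam := by gcongr
      _ ≤ (1 + 1 / c) * (lam + μ) := by
          have : 0 ≤ lam / c := by positivity
          rw [show (1 + 1 / c) * (lam + μ) = lam + μ + lam / c + μ / c by ring]
          linarith
  have hsplit : lam * x ^ k = lam ^ (1 / 2 - k / (2 * α)) * x ^ α *
      (x ^ (k - α) * lam ^ (1 / 2 + k / (2 * α))) := by
    rw [show ∀ a b d e : ℝ, a * b * (d * e) = a * e * (b * d) by intros; ring,
      ← Real.rpow_add hlam, ← Real.rpow_add hx, add_sub_cancel,
      sub_add_add_cancel, add_halves, Real.rpow_one]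
  rw [div_mul_eq_mul_div, div_le_iff₀ (by positivity), hsplit]
  calc lam ^ (1 / 2 - k / (2 * α)) * x ^ α * (x ^ (k - α) * lam ^ (1 / 2 + k / (2 * α)))
      ≤ lam ^ (1 / 2 - k / (2 * α)) * x ^ α * ((1 + 1 / c) * (lam + μ)) := by gcongr
    _ = (1 + 1 / c) * lam ^ (1 / 2 - k / (2 * α)) * x ^ α * (lam + μ) := by ring

/-- Bias bound `∑ (λ/(λ+μ_i)) |f_i| i^k ≤ C λ^{1/2 - k/(2α)} ∑ i^α |f_i|`
for eigenvalues `μ_i ≥ c i^{-2α}` and Hölder-class coefficients. -/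
theorem stmt11 (c α : ℝ) (k : ℕ) (hc : 0 < c) (hα : (k : ℝ) + 1 / 2 < α) :
    ∃ C > 0, ∀ (μ f : ℕ → ℝ) (lam : ℝ),
      (∀ i : ℕ, 1 ≤ i → 0 < μ i) →
      (∀ i : ℕ, 1 ≤ i → c * (i : ℝ) ^ (-(2 * α)) ≤ μ i) →
      Summable (fun i : ℕ => ((i : ℝ) + 1) ^ α * |f (i + 1)|) →
      0 < lam → lam ≤ 1 →
      Summable (fun i : ℕ => lam / (lam + μ (i + 1)) * |f (i + 1)| * ((i : ℝ) + 1) ^ (k : ℕ)) ∧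
      (∑' i : ℕ, lam / (lam + μ (i + 1)) * |f (i + 1)| * ((i : ℝ) + 1) ^ (k : ℕ)) ≤
        C * lam ^ (1 / 2 - (k : ℝ) / (2 * α)) *
          ∑' i : ℕ, ((i : ℝ) + 1) ^ α * |f (i + 1)| := by
  refine ⟨1 + 1 / c, by positivity, fun μ f lam hμ_pos hμ_lb hsum hlam _ => ?_⟩
  have hα_pos : 0 < α := by linarith [k.cast_nonneg (α := ℝ)]
  have hk : |(k : ℝ)| ≤ α := by rw [abs_of_nonneg k.cast_nonneg]; linarith
  set C := (1 + 1 / c) * lam ^ (1 / 2 - (k : ℝ) / (2 * α))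
  have hterm (i : ℕ) : lam / (lam + μ (i + 1)) * |f (i + 1)| * ((i : ℝ) + 1) ^ k ≤
      C * (((i : ℝ) + 1) ^ α * |f (i + 1)|) := by
    have hμ : c * ((i : ℝ) + 1) ^ (-(2 * α)) ≤ μ (i + 1) := by
      exact_mod_cast hμ_lb (i + 1) (by omega)
    have h := div_add_mul_rpow_le hc hα_pos hk (by positivity) hlam hμ
    rw [Real.rpow_natCast] at h
    calc lam / (lam + μ (i + 1)) * |f (i + 1)| * ((i : ℝ) + 1) ^ k
        = lam / (lam + μ (i + 1)) * ((i : ℝ) + 1) ^ k * |f (i + 1)| := by ring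
      _ ≤ C * ((i : ℝ) + 1) ^ α * |f (i + 1)| := by gcongr
      _ = C * (((i : ℝ) + 1) ^ α * |f (i + 1)|) := by ring
  have hnonneg (i : ℕ) : 0 ≤ lam / (lam + μ (i + 1)) * |f (i + 1)| * ((i : ℝ) + 1) ^ k := by
    have := hμ_pos (i + 1) (by omega)
    positivity
  have hS := (hsum.mul_left C).of_nonneg_of_le hnonneg hterm
  refine ⟨hS, ?_⟩
  calc ∑' i : ℕ, lam / (lam + μ (i + 1)) * |f (i + 1)| * ((i : ℝ) + 1) ^ k
      ≤ ∑' i : ℕ, C * (((i : ℝ) + 1) ^ α * |f (i + 1)|) :=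
        hS.tsum_le_tsum hterm (hsum.mul_left C)
    _ = C * ∑' i : ℕ, ((i : ℝ) + 1) ^ α * |f (i + 1)| := tsum_mul_left
end

section
/- Let (μ_i) be positive reals with μ_i ≍ i^{−2α} (i.e., c i^{−2α} ≤ μ_i ≤ C i^{−2α}) for α > k + 1/2 with k a nonnegative integer, λ ∈ (0,1], and define κ̃²_m = ∑_i (μ_i/(λ+μ_i)) i^{2m} for m ∈ {0, k}. Then there is a constant C' (depending only on c, C, α, k) such that for every square-summable sequence (f_i): ∑_i f_i² i^{2k} ≤ C' (κ̃²_k / κ̃²_0) · ∑_i f_i² (λ+μ_i)/μ_i. -/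
/-!
Write `g i = μ i / (λ + μ i) ∈ (0, 1]` and `s i = λ i ^ (2α)`. Since `g i ≤ 1` and
`g i * s i ≤ μ i * i ^ (2α) ≤ C`, and `s ^ (k/α) ≤ max 1 s` because `k ≤ α`, we get
`λ ^ (k/α) i ^ (2k) g i = s i ^ (k/α) g i ≤ max 1 C`. Hence
`∑ f i ^ 2 i ^ (2k) ≤ max 1 C λ ^ (-k/α) ∑ f i ^ 2 / g i`, and it remains to show
`λ ^ (-k/α) ≲ κ̃²_k / κ̃²_0`. Put `y = λ ^ (-1/(2α)) ≥ 1`. Splitting `κ̃²_0` at `⌈y⌉` and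
comparing the tail with `∫_y^∞ t ^ (-2α)` gives `κ̃²_0 ≲ y`; conversely `g i ≥ c / (1 + c)` for
`i ≤ y`, so `κ̃²_k ≳ ∑_{i ≤ y} i ^ (2k) ≳ y ^ (2k+1)`.
-/

open Finset Real

theorem pow_succ_div_le_sum_range_pow (n M : ℕ) :
    (M : ℝ) ^ (n + 1) / (n + 1) ≤ ∑ i ∈ range M, ((i : ℝ) + 1) ^ n := by
  induction M with
  | zero => simp
  | succ M ih =>
    have hstep :
        ((M : ℝ) + 1) ^ (n + 1) - (M : ℝ) ^ (n + 1) ≤ (n + 1) * ((M : ℝ) + 1) ^ n := by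
      have h := abs_pow_sub_pow_le ((M : ℝ) + 1) M (n + 1)
      rw [add_sub_cancel_left, abs_one, one_mul, Nat.add_sub_cancel,
        abs_of_nonneg (by positivity : (0 : ℝ) ≤ M + 1), Nat.abs_cast M,
        max_eq_left (by linarith), Nat.cast_succ] at h
      exact (le_abs_self _).trans h
    rw [sum_range_succ, Nat.cast_succ, div_le_iff₀ (by positivity)]
    rw [div_le_iff₀ (by positivity)] at ih
    linarith

theorem tsum_nat_add_rpow_le {β : ℝ} (hβ : 1 < β) {N : ℕ} (hN : 0 < N) :
    ∑' n : ℕ, ((n + N + 1 : ℕ) : ℝ) ^ (-β) ≤ (N : ℝ) ^ (1 - β) / (β - 1) := by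
  have hN' : (0 : ℝ) < N := by exact_mod_cast hN
  have anti : AntitoneOn (fun x : ℝ ↦ x ^ (-β)) (Set.Ici (N : ℝ)) := fun x hx y _ hxy ↦
    rpow_le_rpow_of_nonpos (hN'.trans_le hx) hxy (by linarith)
  calc ∑' n : ℕ, ((n + N + 1 : ℕ) : ℝ) ^ (-β)
      ≤ ∫ x in Set.Ioi (N : ℝ), x ^ (-β) :=
        anti.tsum_comp_add_le_integral N (integrableOn_Ioi_rpow_of_lt (by linarith) hN')
          fun x hx ↦ rpow_nonneg (hN'.trans hx).le _
    _ = (N : ℝ) ^ (1 - β) / (β - 1) := by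
        rw [integral_Ioi_rpow_of_lt (by linarith) hN', neg_div, ← div_neg]
        ring_nf

theorem rpow_neg_one_div_rpow_neg {x a : ℝ} (hx : 0 ≤ x) (ha : a ≠ 0) :
    (x ^ (-(1 / a))) ^ (-a) = x := by
  rw [one_div, ← inv_neg, rpow_inv_rpow hx (neg_ne_zero.2 ha)]

theorem rpow_le_max_one_self {s p : ℝ} (hs : 0 ≤ s) (hp0 : 0 ≤ p) (hp1 : p ≤ 1) :
    s ^ p ≤ max 1 s := by
  rcases le_total s 1 with h | h
  · exact (rpow_le_one hs h hp0).trans (le_max_left _ _)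
  · exact ((rpow_le_rpow_of_exponent_le h hp1).trans_eq (rpow_one s)).trans (le_max_right _ _)

theorem div_add_mul_rpow_le_s19 {x m lam C α p : ℝ} (hx : 0 < x) (hm : 0 < m) (hlam : 0 < lam)
    (hα : 0 < α) (hp0 : 0 ≤ p) (hpα : p ≤ α) (hmC : m ≤ C * x ^ (-(2 * α))) :
    m / (lam + m) * x ^ (2 * p) ≤ max 1 C * lam ^ (-(p / α)) := by
  set g := m / (lam + m)
  set s := lam * x ^ (2 * α)
  have hg1 : g ≤ 1 := div_le_one_of_le₀ (by linarith) (by positivity)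
  have hgs : g * s ≤ C := by
    have hgl : g * lam ≤ m := by
      rw [div_mul_eq_mul_div, div_le_iff₀ (by positivity)]
      nlinarith
    have hmx : m * x ^ (2 * α) ≤ C := by
      rwa [rpow_neg hx.le, ← div_eq_mul_inv, le_div_iff₀ (by positivity)] at hmC
    calc g * s = g * lam * x ^ (2 * α) := by ring
      _ ≤ m * x ^ (2 * α) := by gcongr
      _ ≤ C := hmx
  have hs : s ^ (p / α) = lam ^ (p / α) * x ^ (2 * p) := by
    rw [mul_rpow hlam.le (by positivity), ← rpow_mul hx.le]
    congr 2
    field_simp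
  calc g * x ^ (2 * p) = lam ^ (-(p / α)) * (g * s ^ (p / α)) := by
        rw [hs, rpow_neg hlam.le]
        field_simp
    _ ≤ lam ^ (-(p / α)) * (g * max 1 s) := by
        gcongr
        exact rpow_le_max_one_self (by positivity) (by positivity) ((div_le_one hα).2 hpα)
    _ ≤ lam ^ (-(p / α)) * max 1 C := by
        gcongr
        rw [mul_max_of_nonneg _ _ (by positivity), mul_one]
        exact max_le_max hg1 hgs
    _ = max 1 C * lam ^ (-(p / α)) := mul_comm _ _

theorem div_one_add_le_div_add {c lam m : ℝ} (hc : 0 ≤ c) (hlam : 0 < lam) (h : c * lam ≤ m) :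
    c / (1 + c) ≤ m / (lam + m) := by
  rw [div_le_div_iff₀ (by positivity) (by nlinarith)]
  nlinarith

theorem summable_and_tsum_le_mul_tsum {a b : ℕ → ℝ} {K : ℝ} (ha : ∀ i, 0 ≤ a i)
    (hab : ∀ i, a i ≤ K * b i) (hb : Summable b) : Summable a ∧ ∑' i, a i ≤ K * ∑' i, b i := by
  have hs := Summable.of_nonneg_of_le ha hab (hb.mul_left K)
  exact ⟨hs, (hs.tsum_le_tsum hab (hb.mul_left K)).trans_eq tsum_mul_left⟩

section EffectiveDimension

variable {μ : ℕ → ℝ} {lam c C α : ℝ}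

theorem summable_div_add_mul_pow (hμ : ∀ i, 1 ≤ i → 0 < μ i)
    (hup : ∀ i : ℕ, 1 ≤ i → μ i ≤ C * (i : ℝ) ^ (-(2 * α))) (hlam : 0 < lam) {k : ℕ}
    (hkα : (k : ℝ) + 1 / 2 < α) :
    Summable fun i : ℕ ↦ μ (i + 1) / (lam + μ (i + 1)) * ((i : ℝ) + 1) ^ (2 * k) := by
  have hq : (2 * k - 2 * α : ℝ) < -1 := by linarith
  refine Summable.of_nonneg_of_le (fun i ↦ ?_) (fun i ↦ ?_)
    (((summable_nat_add_iff 1).2 (summable_nat_rpow.2 hq)).mul_left (C / lam))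
  · have := hμ (i + 1) (by omega)
    positivity
  · have hi : (0 : ℝ) < i + 1 := by positivity
    have hμi := hμ (i + 1) (by omega)
    have hupi := hup (i + 1) (by omega)
    push_cast at hupi ⊢
    calc μ (i + 1) / (lam + μ (i + 1)) * ((i : ℝ) + 1) ^ (2 * k)
        ≤ μ (i + 1) / lam * ((i : ℝ) + 1) ^ (2 * k) := by gcongr; linarith
      _ ≤ C * ((i : ℝ) + 1) ^ (-(2 * α)) / lam * ((i : ℝ) + 1) ^ (2 * k) := by gcongr
      _ = C / lam * ((i : ℝ) + 1) ^ (2 * k - 2 * α : ℝ) := by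
          rw [sub_eq_neg_add, rpow_add hi, ← rpow_natCast]
          push_cast
          ring

theorem summable_div_add (hμ : ∀ i, 1 ≤ i → 0 < μ i)
    (hup : ∀ i : ℕ, 1 ≤ i → μ i ≤ C * (i : ℝ) ^ (-(2 * α))) (hlam : 0 < lam) (hα : 1 < 2 * α) :
    Summable fun i : ℕ ↦ μ (i + 1) / (lam + μ (i + 1)) := by
  simpa using summable_div_add_mul_pow hμ hup hlam (k := 0) (by push_cast; linarith)

theorem tsum_div_add_nat_add_le (hC : 0 ≤ C) (hα : 1 < 2 * α)
    (hμ : ∀ i, 1 ≤ i → 0 < μ i) (hup : ∀ i : ℕ, 1 ≤ i → μ i ≤ C * (i : ℝ) ^ (-(2 * α)))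
    (hlam : 0 < lam) {N : ℕ} (hN : 0 < N) :
    ∑' i : ℕ, μ (i + N + 1) / (lam + μ (i + N + 1)) ≤
      C / lam * ((N : ℝ) ^ (1 - 2 * α) / (2 * α - 1)) := by
  have hmaj : Summable fun i : ℕ ↦ ((i + N + 1 : ℕ) : ℝ) ^ (-(2 * α)) := by
    simpa [add_assoc] using
      (summable_nat_add_iff (N + 1)).2 (summable_nat_rpow.2 (by linarith))
  calc ∑' i : ℕ, μ (i + N + 1) / (lam + μ (i + N + 1))
      ≤ ∑' i : ℕ, C / lam * ((i + N + 1 : ℕ) : ℝ) ^ (-(2 * α)) := by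
        refine Summable.tsum_le_tsum (fun i ↦ ?_)
          ((summable_nat_add_iff N).2 (summable_div_add hμ hup hlam hα)) (hmaj.mul_left _)
        have hμi := hμ (i + N + 1) (by omega)
        calc μ (i + N + 1) / (lam + μ (i + N + 1)) ≤ μ (i + N + 1) / lam := by
              gcongr; linarith
          _ ≤ C * ((i + N + 1 : ℕ) : ℝ) ^ (-(2 * α)) / lam := by
              gcongr; exact hup _ (by omega)
          _ = C / lam * ((i + N + 1 : ℕ) : ℝ) ^ (-(2 * α)) := by ring
    _ = C / lam * ∑' i : ℕ, ((i + N + 1 : ℕ) : ℝ) ^ (-(2 * α)) := tsum_mul_left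
    _ ≤ C / lam * ((N : ℝ) ^ (1 - 2 * α) / (2 * α - 1)) := by
        gcongr
        exact tsum_nat_add_rpow_le hα hN

theorem tsum_div_add_le (hC : 0 ≤ C) (hα : 1 < 2 * α)
    (hμ : ∀ i, 1 ≤ i → 0 < μ i) (hup : ∀ i : ℕ, 1 ≤ i → μ i ≤ C * (i : ℝ) ^ (-(2 * α)))
    (hlam0 : 0 < lam) (hlam1 : lam ≤ 1) :
    ∑' i : ℕ, μ (i + 1) / (lam + μ (i + 1)) ≤
      (2 + C / (2 * α - 1)) * lam ^ (-(1 / (2 * α))) := by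
  have hsum := summable_div_add hμ hup hlam0 hα
  set y := lam ^ (-(1 / (2 * α)))
  have hy1 : 1 ≤ y := one_le_rpow_of_pos_of_le_one_of_nonpos hlam0 hlam1
    (neg_nonpos.2 (by positivity))
  have hylam : y ^ (-(2 * α)) = lam := rpow_neg_one_div_rpow_neg hlam0.le (by positivity)
  set N := ⌈y⌉₊
  have hN0 : 0 < N := Nat.ceil_pos.2 (by linarith)
  have hyN : y ≤ N := Nat.le_ceil y
  have hNy : (N : ℝ) ≤ 2 * y := by linarith [Nat.ceil_lt_add_one (by linarith : 0 ≤ y)]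
  have hhead : ∑ i ∈ range N, μ (i + 1) / (lam + μ (i + 1)) ≤ N := by
    calc ∑ i ∈ range N, μ (i + 1) / (lam + μ (i + 1)) ≤ ∑ i ∈ range N, (1 : ℝ) :=
          sum_le_sum fun i _ ↦
            div_le_one_of_le₀ (by linarith) (by linarith [hμ (i + 1) (by omega)])
      _ = N := by simp
  have htail : ∑' i : ℕ, μ (i + N + 1) / (lam + μ (i + N + 1)) ≤ C / (2 * α - 1) * y :=
    calc ∑' i : ℕ, μ (i + N + 1) / (lam + μ (i + N + 1))
        ≤ C / lam * ((N : ℝ) ^ (1 - 2 * α) / (2 * α - 1)) :=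
          tsum_div_add_nat_add_le hC hα hμ hup hlam0 hN0
      _ ≤ C / lam * (y ^ (1 - 2 * α) / (2 * α - 1)) := by
          gcongr C / lam * (?_ / _)
          exact rpow_le_rpow_of_nonpos (by linarith) hyN (by linarith)
      _ = C / (2 * α - 1) * y := by
          rw [sub_eq_add_neg, rpow_add (by linarith : (0 : ℝ) < y), rpow_one, hylam]
          field_simp
  rw [← hsum.sum_add_tsum_nat_add N]
  linarith

theorem le_tsum_div_add_mul_pow (hc : 0 < c) (hα : 0 < α)
    (hμ : ∀ i, 1 ≤ i → 0 < μ i) (hlow : ∀ i : ℕ, 1 ≤ i → c * (i : ℝ) ^ (-(2 * α)) ≤ μ i)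
    (hlam0 : 0 < lam) (hlam1 : lam ≤ 1) (k : ℕ)
    (hsum : Summable fun i : ℕ ↦ μ (i + 1) / (lam + μ (i + 1)) * ((i : ℝ) + 1) ^ (2 * k)) :
    c / ((1 + c) * (2 * k + 1) * 2 ^ (2 * k + 1)) * lam ^ (-((2 * k + 1) / (2 * α))) ≤
      ∑' i : ℕ, μ (i + 1) / (lam + μ (i + 1)) * ((i : ℝ) + 1) ^ (2 * k) := by
  set y := lam ^ (-(1 / (2 * α)))
  have hy1 : 1 ≤ y := one_le_rpow_of_pos_of_le_one_of_nonpos hlam0 hlam1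
    (neg_nonpos.2 (by positivity))
  have hylam : y ^ (-(2 * α)) = lam := rpow_neg_one_div_rpow_neg hlam0.le (by positivity)
  have hypow : y ^ (2 * k + 1) = lam ^ (-((2 * k + 1) / (2 * α))) := by
    rw [← rpow_natCast, ← rpow_mul hlam0.le]
    congr 1
    push_cast
    field_simp
  set M := ⌊y⌋₊
  have hMy : (M : ℝ) ≤ y := Nat.floor_le (by linarith)
  have hyM : y ≤ 2 * M := by
    have : (1 : ℝ) ≤ M := by exact_mod_cast Nat.le_floor (by exact_mod_cast hy1)
    linarith [Nat.lt_floor_add_one y]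
  have hweight : ∀ i ∈ range M, c / (1 + c) ≤ μ (i + 1) / (lam + μ (i + 1)) := by
    intro i hi
    have hiy : ((i + 1 : ℕ) : ℝ) ≤ y := le_trans (by exact_mod_cast mem_range.1 hi) hMy
    refine div_one_add_le_div_add hc.le hlam0 (le_trans ?_ (hlow (i + 1) (by omega)))
    gcongr
    rw [← hylam]
    exact rpow_le_rpow_of_nonpos (by positivity) hiy (by linarith)
  calc c / ((1 + c) * (2 * k + 1) * 2 ^ (2 * k + 1)) * lam ^ (-((2 * k + 1) / (2 * α)))
      = c / (1 + c) * ((y / 2) ^ (2 * k + 1) / (2 * k + 1)) := by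
        rw [← hypow, div_pow]
        field_simp
    _ ≤ c / (1 + c) * ((M : ℝ) ^ (2 * k + 1) / (2 * k + 1)) := by
        gcongr
        linarith
    _ ≤ c / (1 + c) * ∑ i ∈ range M, ((i : ℝ) + 1) ^ (2 * k) := by
        gcongr
        exact_mod_cast pow_succ_div_le_sum_range_pow (2 * k) M
    _ ≤ ∑ i ∈ range M, μ (i + 1) / (lam + μ (i + 1)) * ((i : ℝ) + 1) ^ (2 * k) := by
        rw [mul_sum]
        exact sum_le_sum fun i hi ↦
          mul_le_mul_of_nonneg_right (hweight i hi) (by positivity)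
    _ ≤ ∑' i : ℕ, μ (i + 1) / (lam + μ (i + 1)) * ((i : ℝ) + 1) ^ (2 * k) :=
        hsum.sum_le_tsum _ fun i _ ↦ by have := hμ (i + 1) (by omega); positivity

theorem pow_le_mul_div_add (hμ : ∀ i, 1 ≤ i → 0 < μ i)
    (hup : ∀ i : ℕ, 1 ≤ i → μ i ≤ C * (i : ℝ) ^ (-(2 * α))) (hlam : 0 < lam) (hα : 0 < α)
    {k : ℕ} (hkα : (k : ℝ) ≤ α) (i : ℕ) :
    ((i : ℝ) + 1) ^ (2 * k) ≤ max 1 C * lam ^ (-(k / α)) * ((lam + μ (i + 1)) / μ (i + 1)) := by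
  have hμi := hμ (i + 1) (by omega)
  have h := div_add_mul_rpow_le_s19 (x := (i : ℝ) + 1) (p := k) (by positivity) hμi hlam hα
    (by positivity) hkα (by exact_mod_cast hup (i + 1) (by omega))
  rw [show (2 * k : ℝ) = (2 * k : ℕ) by push_cast; ring, rpow_natCast, div_mul_eq_mul_div,
    div_le_iff₀ (by positivity)] at h
  rw [mul_div_assoc', le_div_iff₀ hμi]
  linarith

theorem max_one_mul_rpow_le_mul_div (hc : 0 < c) (hC : 0 ≤ C) {k : ℕ}
    (hkα : (k : ℝ) + 1 / 2 < α) (hμ : ∀ i, 1 ≤ i → 0 < μ i)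
    (hlow : ∀ i : ℕ, 1 ≤ i → c * (i : ℝ) ^ (-(2 * α)) ≤ μ i)
    (hup : ∀ i : ℕ, 1 ≤ i → μ i ≤ C * (i : ℝ) ^ (-(2 * α))) (hlam0 : 0 < lam)
    (hlam1 : lam ≤ 1) :
    max 1 C * lam ^ (-(k / α)) ≤
      max 1 C * (2 + C / (2 * α - 1)) * ((1 + c) * (2 * k + 1) * 2 ^ (2 * k + 1)) / c *
        ((∑' i : ℕ, μ (i + 1) / (lam + μ (i + 1)) * ((i : ℝ) + 1) ^ (2 * k)) /
          ∑' i : ℕ, μ (i + 1) / (lam + μ (i + 1))) := by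
  have hα : 0 < α := by linarith [(Nat.cast_nonneg k : (0 : ℝ) ≤ k)]
  have hS0pos : 0 < ∑' i : ℕ, μ (i + 1) / (lam + μ (i + 1)) := by
    refine (summable_div_add hμ hup hlam0 (by linarith)).tsum_pos (fun i ↦ ?_) 0 ?_
    · have := hμ (i + 1) (by omega)
      positivity
    · have := hμ (0 + 1) le_rfl
      positivity
  have hS0 := tsum_div_add_le hC (by linarith) hμ hup hlam0 hlam1
  have hSk := le_tsum_div_add_mul_pow hc hα hμ hlow hlam0 hlam1 k
    (summable_div_add_mul_pow hμ hup hlam0 hkα)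
  have hlam : lam ^ (-(k / α)) * lam ^ (-(1 / (2 * α))) =
      lam ^ (-((2 * k + 1) / (2 * α))) := by
    rw [← rpow_add hlam0]
    congr 1
    field_simp
    ring
  rw [mul_div_assoc', le_div_iff₀ hS0pos]
  calc max 1 C * lam ^ (-(k / α)) * ∑' i : ℕ, μ (i + 1) / (lam + μ (i + 1))
      ≤ max 1 C * lam ^ (-(k / α)) * ((2 + C / (2 * α - 1)) * lam ^ (-(1 / (2 * α)))) := by
        gcongr
    _ = max 1 C * (2 + C / (2 * α - 1)) * ((1 + c) * (2 * k + 1) * 2 ^ (2 * k + 1)) / c *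
          (c / ((1 + c) * (2 * k + 1) * 2 ^ (2 * k + 1)) *
            lam ^ (-((2 * k + 1) / (2 * α)))) := by
        rw [← hlam]
        field_simp
    _ ≤ _ := by
        gcongr
        have : 0 < 2 * α - 1 := by linarith
        positivity

end EffectiveDimension

/-- Sequence-space form of Lemma 3: `‖f^{(k)}‖₂² ≲ (κ̃²_k/κ̃²_0) ‖f‖²_{H̃}` for
kernels with polynomially decaying eigenvalues `μ_i ≍ i^{-2α}`. -/
theorem stmt19 (c C α : ℝ) (k : ℕ) (hc : 0 < c) (hC : 0 < C)
    (hα : (k : ℝ) + 1 / 2 < α) :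
    ∃ C' > 0, ∀ (μ : ℕ → ℝ) (lam : ℝ),
      (∀ i : ℕ, 1 ≤ i → 0 < μ i) →
      (∀ i : ℕ, 1 ≤ i → c * (i : ℝ) ^ (-(2 * α)) ≤ μ i) →
      (∀ i : ℕ, 1 ≤ i → μ i ≤ C * (i : ℝ) ^ (-(2 * α))) →
      0 < lam → lam ≤ 1 →
      ∀ f : ℕ → ℝ, Summable (fun i : ℕ => (f i) ^ 2) →
        Summable (fun i : ℕ => (f (i + 1)) ^ 2 * (lam + μ (i + 1)) / μ (i + 1)) →
        Summable (fun i : ℕ => (f (i + 1)) ^ 2 * ((i : ℝ) + 1) ^ (2 * k)) ∧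
        (∑' i : ℕ, (f (i + 1)) ^ 2 * ((i : ℝ) + 1) ^ (2 * k)) ≤
          C' * ((∑' i : ℕ, μ (i + 1) / (lam + μ (i + 1)) * ((i : ℝ) + 1) ^ (2 * k)) /
                (∑' i : ℕ, μ (i + 1) / (lam + μ (i + 1)))) *
            ∑' i : ℕ, (f (i + 1)) ^ 2 * (lam + μ (i + 1)) / μ (i + 1) := by
  have hα1 : 0 < 2 * α - 1 := by linarith [(Nat.cast_nonneg k : (0 : ℝ) ≤ k)]
  refine ⟨max 1 C * (2 + C / (2 * α - 1)) * ((1 + c) * (2 * k + 1) * 2 ^ (2 * k + 1)) / c,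
    by positivity, fun μ lam hμ hlow hup hlam0 hlam1 f _ hfH ↦ ?_⟩
  have hterm : ∀ i : ℕ, f (i + 1) ^ 2 * ((i : ℝ) + 1) ^ (2 * k) ≤
      max 1 C * lam ^ (-(k / α)) * (f (i + 1) ^ 2 * (lam + μ (i + 1)) / μ (i + 1)) := by
    intro i
    calc f (i + 1) ^ 2 * ((i : ℝ) + 1) ^ (2 * k)
        ≤ f (i + 1) ^ 2 * (max 1 C * lam ^ (-(k / α)) * ((lam + μ (i + 1)) / μ (i + 1))) := by
          gcongr
          exact pow_le_mul_div_add hμ hup hlam0 (by linarith) (by linarith) i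
      _ = max 1 C * lam ^ (-(k / α)) * (f (i + 1) ^ 2 * (lam + μ (i + 1)) / μ (i + 1)) := by
          ring
  obtain ⟨hsum, hle⟩ := summable_and_tsum_le_mul_tsum (fun i ↦ by positivity) hterm hfH
  have hK := max_one_mul_rpow_le_mul_div hc hC.le hα hμ hlow hup hlam0 hlam1
  refine ⟨hsum, hle.trans (mul_le_mul_of_nonneg_right hK (tsum_nonneg fun i ↦ ?_))⟩
  have := hμ (i + 1) (by omega)
  positivity
end
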